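/- Let X be an integral locally noetherian space with big injective E_X. If J is a nonzero injective object of Mod X, then Hom(E_X, J) ≠ 0. -/

import Mathlib

open CategoryTheory CategoryTheory.Limits

universe w v u

section Preliminaries

variable {C : Type u} [Category.{v} C]

/-- An object of a category is *noetherian* if its lattice of subobjects satisfies
the ascending chain condition. -/
def IsNoetherianObject (N : C) : Prop := WellFoundedGT (Subobject N)

/-- A Grothendieck category (non-commutative space) is *locally noetherian* if it has a
set of noetherian generators, i.e. a separating family of noetherian objects. -/
def LocallyNoetherian (C : Type u) [Category.{v} C] : Prop :=
  ∃ (ι : Type v) (G : ι → C), (∀ i, _root_.IsNoetherianObject (G i)) ∧ ObjectProperty.IsSeparating (ObjectProperty.ofObj G)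

/-- `M` is a subquotient of `N`: a quotient of a subobject of `N`. -/
def IsSubquotient (N M : C) : Prop :=
  ∃ (S : Subobject N) (f : (S : C) ⟶ M), Epi f

end Preliminaries

/-- Any abelian category has finite biproducts. -/
instance (priority := 100) abelianHasFiniteBiproducts {C : Type u} [Category.{v} C]
    [Abelian C] : HasFiniteBiproducts C :=
  HasFiniteBiproducts.of_hasFiniteProducts

section BigInjective

variable {C : Type u} [Category.{v} C] [Abelian C] [HasColimits C] [AB5 C]

/-- `E` is the *big injective* making the locally noetherian space `X` (with `Mod X = C`)
an integral space: `E` is an indecomposable injective object whose endomorphism ring is a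
division ring, and every object is a subquotient of a coproduct of copies of `E`. -/
structure IsBigInjective (E : C) : Prop where
  injective : Injective E
  nonzero : ¬ IsZero E
  indecomposable : ∀ (A B : C), (E ≅ A ⊞ B) → IsZero A ∨ IsZero B
  division : ∀ f : E ⟶ E, f ≠ 0 → IsIso f
  generates : ∀ M : C, ∃ ι : Type v, IsSubquotient (∐ (fun _ : ι => E)) M

/-- An object `M` is *torsion* (with respect to the big injective `E`) if `Hom(M, E) = 0`. -/
def IsTorsion (E M : C) : Prop := ∀ f : M ⟶ E, f = 0

/-- An object `M` is *torsion-free* if its only torsion subobject is `0`. -/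
def IsTorsionFree (E M : C) : Prop := ∀ S : Subobject M, IsTorsion E (S : C) → S = ⊥

/-- The *rank* of `M`: the length of `Hom(M, E)` as a left module over the division ring
`End(E)`, expressed as the Krull dimension of its lattice of submodules. -/
noncomputable def rank (E M : C) : WithBot ℕ∞ :=
  Order.krullDim (Submodule (End E) (M ⟶ E))

/-- A subobject `L` of `M` is *essential* if every nonzero subobject of `M` meets it
nontrivially. -/
def IsEssentialSubobject {M : C} (L : Subobject M) : Prop :=
  ∀ S : Subobject M, S ≠ ⊥ → S ⊓ L ≠ ⊥

end BigInjective

section Lemmas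

variable {C : Type u} [Category.{v} C]

lemma Sigma.exists_ι_comp_ne_zero [HasZeroMorphisms C] {ι : Type w} {F : ι → C}
    [HasCoproduct F] {X : C} {g : ∐ F ⟶ X} (hg : g ≠ 0) : ∃ i, Sigma.ι F i ≫ g ≠ 0 := by
  by_contra! h
  exact hg (Sigma.hom_ext _ _ fun i => by simpa using h i)

lemma IsSubquotient.exists_ne_zero_of_injective [HasZeroMorphisms C] {N M : C}
    (h : IsSubquotient N M) (hM : Injective M) (hM0 : ¬ IsZero M) : ∃ g : N ⟶ M, g ≠ 0 := by
  obtain ⟨S, f, hf⟩ := h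
  have hf0 : f ≠ 0 := by
    rintro rfl
    exact hM0 (IsZero.of_epi_zero (S : C) M)
  refine ⟨Injective.factorThru f S.arrow, fun hg => hf0 ?_⟩
  rw [← Injective.comp_factorThru f S.arrow, hg, comp_zero]

end Lemmas

theorem statement1_general {C : Type u} [Category.{v} C] [Abelian C] [HasColimits C] [AB5 C]
    (E : C) (hE : IsBigInjective E)
    (J : C) (hJ : Injective J) (hJ0 : ¬ IsZero J) :
    ∃ f : E ⟶ J, f ≠ 0 := by
  obtain ⟨ι, hJsub⟩ := hE.generates J
  obtain ⟨g, hg⟩ := hJsub.exists_ne_zero_of_injective hJ hJ0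
  obtain ⟨i, hi⟩ := Sigma.exists_ι_comp_ne_zero hg
  exact ⟨_, hi⟩

/-- Proposition 3.7. If `X` is an integral locally noetherian space with
big injective `E` and `J` is a nonzero injective object, then `Hom(E, J) ≠ 0`. -/
theorem statement1 {C : Type u} [Category.{v} C] [Abelian C] [HasColimits C] [AB5 C]
    (hX : LocallyNoetherian C) (E : C) (hE : IsBigInjective E)
    (J : C) (hJ : Injective J) (hJ0 : ¬ IsZero J) :
    ∃ f : E ⟶ J, f ≠ 0 :=
  statement1_general E hE J hJ hJ0
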